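/- Let E be a finite-dimensional solvable (not necessarily evolution) algebra over a field. Then the subalgebra lattice of E is modular if and only if every subalgebra of E is a quasi-ideal. -/
import Mathlib


open Submodule

variable {K : Type} [Field K] {E : Type} [AddCommGroup E] [Module K E]

/-- The product of two submodules under a bilinear multiplication. -/
def mulSet (μ : E →ₗ[K] E →ₗ[K] E) (U V : Submodule K E) : Submodule K E :=
  Submodule.span K {z | ∃ u ∈ U, ∃ v ∈ V, z = μ u v}

/-- Derived series starting from a submodule: `dser μ I 0 = I`,
`dser μ I (k+1) = (dser μ I k)·(dser μ I k)`.  Thus `dser μ ⊤ (k-1) = E^(k)`. -/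
def dser (μ : E →ₗ[K] E →ₗ[K] E) (I : Submodule K E) : ℕ → Submodule K E
  | 0 => I
  | k + 1 => mulSet μ (dser μ I k) (dser μ I k)

/-- Lower central-type series: `lowerPow μ k = E^(k+1)` where
`E^1 = E` and `E^(k+1) = Σ_{i=1}^k E^i E^(k+1-i)`. -/
def lowerPow (μ : E →ₗ[K] E →ₗ[K] E) : ℕ → Submodule K E
  | 0 => ⊤
  | k + 1 => ⨆ i : Fin (k + 1), mulSet μ (lowerPow μ i.1) (lowerPow μ (k - i.1))
  decreasing_by
  · exact i.2
  · omega

/-- A submodule closed under the multiplication. -/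
def IsSubalg (μ : E →ₗ[K] E →ₗ[K] E) (U : Submodule K E) : Prop :=
  ∀ x ∈ U, ∀ y ∈ U, μ x y ∈ U

/-- A (two-sided) ideal. -/
def IsIdeal (μ : E →ₗ[K] E →ₗ[K] E) (I : Submodule K E) : Prop :=
  ∀ x ∈ I, ∀ y : E, μ x y ∈ I ∧ μ y x ∈ I

/-- Subalgebra generated by a set. -/
def gen (μ : E →ₗ[K] E →ₗ[K] E) (s : Set E) : Submodule K E :=
  sInf {W | IsSubalg μ W ∧ s ⊆ W}

/-- Quasi-ideal: the subalgebra generated together with any subalgebra is the vector-space sum. -/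
def QuasiIdeal (μ : E →ₗ[K] E →ₗ[K] E) (U : Submodule K E) : Prop :=
  IsSubalg μ U ∧ ∀ V : Submodule K E, IsSubalg μ V → gen μ (↑U ∪ ↑V) = U ⊔ V

/-- The subalgebra lattice is modular. -/
def ModularLat (μ : E →ₗ[K] E →ₗ[K] E) : Prop :=
  ∀ U V W : Submodule K E, IsSubalg μ U → IsSubalg μ V → IsSubalg μ W → U ≤ W →
    gen μ (↑U ∪ ↑(V ⊓ W)) = gen μ (↑U ∪ ↑V) ⊓ W

/-- The subalgebra lattice is distributive. -/
def DistribLat (μ : E →ₗ[K] E →ₗ[K] E) : Prop :=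
  ∀ U V W : Submodule K E, IsSubalg μ U → IsSubalg μ V → IsSubalg μ W →
    gen μ (↑U ∪ ↑(V ⊓ W)) = gen μ (↑U ∪ ↑V) ⊓ gen μ (↑U ∪ ↑W)

/-- Supersolvable: a complete flag of ideals. -/
def Supersolvable (μ : E →ₗ[K] E →ₗ[K] E) : Prop :=
  ∃ I : ℕ → Submodule K E, (∀ i, IsIdeal μ (I i)) ∧ (∀ i, I i ≤ I (i + 1)) ∧
    (∀ i ≤ Module.finrank K E, Module.finrank K (I i) = i) ∧ I (Module.finrank K E) = ⊤

/-- Maximal subalgebra `A` of the subalgebra `B`. -/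
def MaxIn (μ : E →ₗ[K] E →ₗ[K] E) (A B : Submodule K E) : Prop :=
  A ≤ B ∧ A ≠ B ∧ ∀ W : Submodule K E, IsSubalg μ W → A ≤ W → W ≤ B → W = A ∨ W = B

variable {μ : E →ₗ[K] E →ₗ[K] E}

lemma mem_mulSet {U V : Submodule K E} {x y : E} (hx : x ∈ U) (hy : y ∈ V) :
    μ x y ∈ mulSet μ U V :=
  subset_span ⟨x, hx, y, hy, rfl⟩

lemma mulSet_mono {U U' V V' : Submodule K E} (h1 : U ≤ U') (h2 : V ≤ V') :
    mulSet μ U V ≤ mulSet μ U' V' := by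
  apply span_mono
  rintro z ⟨u, hu, v, hv, rfl⟩
  exact ⟨u, h1 hu, v, h2 hv, rfl⟩

lemma mulSet_le {U V W : Submodule K E} (h : ∀ x ∈ U, ∀ y ∈ V, μ x y ∈ W) :
    mulSet μ U V ≤ W := by
  rw [mulSet, span_le]
  rintro z ⟨u, hu, v, hv, rfl⟩
  exact h u hu v hv

lemma dser_mono {I J : Submodule K E} (h : I ≤ J) : ∀ k, dser μ I k ≤ dser μ J k
  | 0 => h
  | k + 1 => mulSet_mono (dser_mono h k) (dser_mono h k)

lemma subalg_between {U V : Submodule K E} (h1 : mulSet μ V V ≤ U) (h2 : U ≤ V) :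
    IsSubalg μ U :=
  fun x hx y hy => h1 (mem_mulSet (h2 hx) (h2 hy))

lemma isSubalg_inf {U V : Submodule K E} (hU : IsSubalg μ U) (hV : IsSubalg μ V) :
    IsSubalg μ (U ⊓ V) :=
  fun x hx y hy => ⟨hU x hx.1 y hy.1, hV x hx.2 y hy.2⟩

lemma isSubalg_top : IsSubalg μ (⊤ : Submodule K E) := fun _ _ _ _ => trivial

lemma isSubalg_bot : IsSubalg μ (⊥ : Submodule K E) := by
  intro x hx y hy
  simp only [Submodule.mem_bot] at *
  subst hx; simp

lemma subset_gen {s : Set E} : s ⊆ gen μ s := by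
  intro x hx
  show x ∈ gen μ s
  rw [gen, Submodule.mem_sInf]
  exact fun W hW => hW.2 hx

lemma gen_le {s : Set E} {W : Submodule K E} (hW : IsSubalg μ W) (hs : s ⊆ W) :
    gen μ s ≤ W :=
  sInf_le ⟨hW, hs⟩

lemma isSubalg_gen {s : Set E} : IsSubalg μ (gen μ s) := by
  intro x hx y hy
  rw [gen, Submodule.mem_sInf] at *
  exact fun W hW => hW.1 x (hx W hW) y (hy W hW)

lemma gen_mono {s t : Set E} (h : s ⊆ t) : gen μ s ≤ gen μ t :=
  gen_le isSubalg_gen (h.trans subset_gen)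

lemma gen_eq_self {U : Submodule K E} (hU : IsSubalg μ U) : gen μ ↑U = U :=
  le_antisymm (gen_le hU le_rfl) subset_gen

lemma sup_le_gen {U V : Submodule K E} : U ⊔ V ≤ gen μ (↑U ∪ ↑V) :=
  sup_le (fun _ h => subset_gen (Set.mem_union_left _ h))
    (fun _ h => subset_gen (Set.mem_union_right _ h))

lemma gen_union_le {U V W : Submodule K E} (hW : IsSubalg μ W) (h1 : U ≤ W) (h2 : V ≤ W) :
    gen μ (↑U ∪ ↑V) ≤ W :=
  gen_le hW (Set.union_subset h1 h2)

lemma gen_union_comm {U V : Submodule K E} : gen μ (↑U ∪ ↑V) = gen μ (↑V ∪ ↑U) := by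
  rw [Set.union_comm]

lemma gen_union_of_le {U V : Submodule K E} (hU : IsSubalg μ U) (h : V ≤ U) :
    gen μ (↑U ∪ ↑V) = U :=
  le_antisymm (gen_union_le hU le_rfl h) (le_trans le_sup_left sup_le_gen)

lemma le_gen_union_left {U V : Submodule K E} : U ≤ gen μ (↑U ∪ ↑V) :=
  le_trans le_sup_left sup_le_gen

lemma le_gen_union_right {U V : Submodule K E} : V ≤ gen μ (↑U ∪ ↑V) :=
  le_trans le_sup_right sup_le_gen

lemma gen_union_mono_right {U V V' : Submodule K E} (h : V ≤ V') :
    gen μ (↑U ∪ ↑V) ≤ gen μ (↑U ∪ ↑V') :=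
  gen_mono (Set.union_subset_union_right _ h)

lemma gen_gen {U B' B : Submodule K E} (h : B' ≤ B) :
    gen μ (↑(gen μ (↑U ∪ ↑B')) ∪ ↑B) = gen μ (↑U ∪ ↑B) := by
  apply le_antisymm
  · exact gen_union_le isSubalg_gen
      (gen_le isSubalg_gen (Set.union_subset le_gen_union_left (h.trans le_gen_union_right)))
      le_gen_union_right
  · exact gen_union_le isSubalg_gen (le_trans le_gen_union_left le_gen_union_left)
      le_gen_union_right

open Module in
/-- A complete chain of subspaces between `A` and `B`. -/
lemma chain_lemma [FiniteDimensional K E] :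
    ∀ (g : ℕ) (A B : Submodule K E), A ≤ B → finrank K B - finrank K A = g →
    ∃ C : ℕ → Submodule K E, Monotone C ∧ C 0 = A ∧ (∀ j, A ≤ C j ∧ C j ≤ B) ∧
      (∀ j ≤ g, finrank K (C j) = finrank K A + j) ∧ (∀ j, g ≤ j → C j = B) := by
  intro g
  induction g with
  | zero =>
    intro A B hle hg
    have hAB : A = B := Submodule.eq_of_le_of_finrank_le hle (by omega)
    subst hAB
    exact ⟨fun _ => A, monotone_const, rfl, fun j => ⟨le_rfl, le_rfl⟩,
      fun j hj => by simp; omega, fun j _ => rfl⟩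
  | succ g ih =>
    intro A B hle hg
    have hAB : A ≠ B := by
      intro h; subst h; omega
    obtain ⟨x, hxB, hxA⟩ := SetLike.exists_of_lt (lt_of_le_of_ne hle hAB)
    have hx0 : x ≠ 0 := fun h => hxA (h ▸ A.zero_mem)
    set A' := A ⊔ (K ∙ x) with hA'
    have hinf : A ⊓ (K ∙ x) = ⊥ := by
      rw [eq_bot_iff]
      rintro y ⟨hyA, hyx⟩
      obtain ⟨c, rfl⟩ := Submodule.mem_span_singleton.mp hyx
      rcases eq_or_ne c 0 with rfl | hc
      · simp
      · refine absurd ?_ hxA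
        have := A.smul_mem c⁻¹ hyA
        rwa [smul_smul, inv_mul_cancel₀ hc, one_smul] at this
    have hrA' : finrank K A' = finrank K A + 1 := by
      have := Submodule.finrank_sup_add_finrank_inf_eq A (K ∙ x)
      rw [hinf, finrank_span_singleton hx0] at this
      simpa using this
    have hA'B : A' ≤ B := sup_le hle ((Submodule.span_singleton_le_iff_mem x B).mpr hxB)
    have hrB : finrank K B - finrank K A' = g := by omega
    obtain ⟨C', hmono, hC0, hbet, hdim, htop⟩ := ih A' B hA'B hrB
    refine ⟨fun j => Nat.rec A (fun j _ => C' j) j, ?_, rfl, ?_, ?_, ?_⟩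
    · apply monotone_nat_of_le_succ
      intro n
      cases n with
      | zero => show A ≤ C' 0; rw [hC0]; exact le_sup_left
      | succ n => exact hmono (Nat.le_succ n)
    · intro j
      cases j with
      | zero => exact ⟨le_rfl, hle⟩
      | succ j =>
        refine ⟨?_, (hbet j).2⟩
        show A ≤ C' j
        exact le_trans (le_sup_left : A ≤ A') (hbet j).1
    · intro j hj
      cases j with
      | zero => simp
      | succ j => rw [hdim j (by omega)]; omega
    · intro j hj
      cases j with
      | zero => omega
      | succ j => exact htop j (by omega)

open Module in
/-- Every subalgebra of a solvable algebra admits a complete flag of subalgebras. -/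
lemma flag_lemma [FiniteDimensional K E] (hsolv : ∃ m : ℕ, dser μ (⊤ : Submodule K E) m = ⊥) :
    ∀ (V : Submodule K E), IsSubalg μ V →
    ∃ F : ℕ → Submodule K E, Monotone F ∧ (∀ j, IsSubalg μ (F j)) ∧ (∀ j, F j ≤ V) ∧
      (∀ j ≤ finrank K V, finrank K (F j) = j) ∧ (∀ j, finrank K V ≤ j → F j = V) := by
  suffices H : ∀ (n : ℕ) (V : Submodule K E), finrank K V = n → IsSubalg μ V →
      ∃ F : ℕ → Submodule K E, Monotone F ∧ (∀ j, IsSubalg μ (F j)) ∧ (∀ j, F j ≤ V) ∧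
      (∀ j ≤ finrank K V, finrank K (F j) = j) ∧ (∀ j, finrank K V ≤ j → F j = V) by
    exact fun V hV => H (finrank K V) V rfl hV
  intro n
  induction n using Nat.strong_induction_on with
  | _ n ih =>
    intro V hrV hV
    rcases eq_or_ne V ⊥ with rfl | hVbot
    · refine ⟨fun _ => ⊥, monotone_const, fun _ => isSubalg_bot, fun _ => le_rfl, ?_, ?_⟩
      · intro j hj
        simp only [finrank_bot] at *
        omega
      · intro j _; rfl
    · set V2 := mulSet μ V V with hV2
      have hV2le : V2 ≤ V := mulSet_le hV
      have hV2ne : V2 ≠ V := by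
        intro heq
        obtain ⟨m, hm⟩ := hsolv
        have hall : ∀ k, dser μ V k = V := by
          intro k
          induction k with
          | zero => rfl
          | succ k ihk => show mulSet μ (dser μ V k) (dser μ V k) = V; rw [ihk]; exact heq
        have : V ≤ ⊥ := hm ▸ (hall m ▸ dser_mono le_top m)
        exact hVbot (le_bot_iff.mp this)
      have hV2lt : V2 < V := lt_of_le_of_ne hV2le hV2ne
      have hV2sub : IsSubalg μ V2 := subalg_between le_rfl hV2le
      have hr2lt : finrank K V2 < n := hrV ▸ Submodule.finrank_lt_finrank_of_lt hV2lt
      obtain ⟨F2, hF2mono, hF2sub, hF2le, hF2dim, hF2top⟩ := ih _ hr2lt V2 rfl hV2sub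
      obtain ⟨C, hCmono, hC0, hCbet, hCdim, hCtop⟩ :=
        chain_lemma (finrank K V - finrank K V2) V2 V hV2le rfl
      set r2 := finrank K V2 with hr2
      refine ⟨fun j => if j ≤ r2 then F2 j else C (j - r2), ?_, ?_, ?_, ?_, ?_⟩
      · apply monotone_nat_of_le_succ
        intro j
        by_cases h1 : j + 1 ≤ r2
        · simp only [if_pos (by omega : j ≤ r2), if_pos h1]
          exact hF2mono (Nat.le_succ j)
        · by_cases h2 : j ≤ r2
          · simp only [if_pos h2, if_neg h1]
            calc F2 j ≤ V2 := hF2le j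
            _ = C 0 := hC0.symm
            _ ≤ C (j + 1 - r2) := hCmono (by omega)
          · simp only [if_neg h1, if_neg h2]
            exact hCmono (by omega)
      · intro j
        by_cases h : j ≤ r2
        · simpa only [if_pos h] using hF2sub j
        · simp only [if_neg h]
          exact subalg_between (hCbet (j - r2)).1 (hCbet (j - r2)).2
      · intro j
        by_cases h : j ≤ r2
        · simp only [if_pos h]; exact (hF2le j).trans hV2le
        · simp only [if_neg h]; exact (hCbet (j - r2)).2
      · intro j hj
        show finrank K ↥(if j ≤ r2 then F2 j else C (j - r2)) = j
        by_cases h : j ≤ r2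
        · rw [if_pos h]; exact hF2dim j h
        · rw [if_neg h, hCdim (j - r2) (by omega)]
          omega
      · intro j hj
        have hlt : r2 < finrank K V := Submodule.finrank_lt_finrank_of_lt hV2lt
        show (if j ≤ r2 then F2 j else C (j - r2)) = V
        rw [if_neg (by omega : ¬ j ≤ r2)]
        exact hCtop (j - r2) (by omega)

/-- If the join chain stalls, the intersection chain moves. -/
lemma stall_lemma (hmod : ModularLat μ) {X Y' Y : Submodule K E}
    (hX : IsSubalg μ X) (hY' : IsSubalg μ Y') (hY : IsSubalg μ Y) (hle : Y' ≤ Y)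
    (hstall : gen μ (↑X ∪ ↑Y') = gen μ (↑X ∪ ↑Y)) (hXY : X ⊓ Y ≤ Y') : Y' = Y := by
  have h := hmod Y' X Y hY' hX hY hle
  have h2 : gen μ (↑Y' ∪ ↑X) = gen μ (↑X ∪ ↑Y) := gen_union_comm.trans hstall
  have h3 : Y ≤ gen μ (↑Y' ∪ ↑X) := h2 ▸ le_gen_union_right
  have h4 : Y ≤ gen μ (↑Y' ∪ ↑(X ⊓ Y)) := by
    rw [h]; exact le_inf h3 le_rfl
  have h5 : gen μ (↑Y' ∪ ↑(X ⊓ Y)) ≤ Y' := gen_union_le hY' le_rfl hXY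
  exact le_antisymm hle (h4.trans h5)

open Module in
/-- A maximal subalgebra of a subalgebra of a solvable algebra has codimension 1. -/
lemma maximal_codim [FiniteDimensional K E] (hmod : ModularLat μ)
    (hsolv : ∃ m : ℕ, dser μ (⊤ : Submodule K E) m = ⊥) {A T : Submodule K E}
    (hA : IsSubalg μ A) (hT : IsSubalg μ T) (hle : A ≤ T) (hne : A ≠ T)
    (hmax : ∀ W, IsSubalg μ W → A ≤ W → W ≤ T → W = A ∨ W = T) :
    finrank K T ≤ finrank K A + 1 := by
  obtain ⟨F, hFmono, hFsub, hFle, hFdim, hFtop⟩ := flag_lemma hsolv T hT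
  set t := finrank K T with ht
  set H : ℕ → Submodule K E := fun j => gen μ (↑A ∪ ↑(F j)) with hH
  have hHle : ∀ j, H j ≤ T := fun j => gen_union_le hT hle (hFle j)
  have hAH : ∀ j, A ≤ H j := fun j => le_gen_union_left
  have hHval : ∀ j, H j = A ∨ H j = T := fun j =>
    hmax (H j) isSubalg_gen (hAH j) (hHle j)
  have hF0 : F 0 = ⊥ := by
    rw [← Submodule.finrank_eq_zero (R := K)]
    exact hFdim 0 (Nat.zero_le _)
  have hHt : H t = T := le_antisymm (hHle t) ((hFtop t le_rfl) ▸ le_gen_union_right)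
  have key : ∀ j, j ≤ t →
      (H j = A → finrank K ↥(A ⊓ F j) = j) ∧ j ≤ finrank K ↥(A ⊓ F j) + 1 := by
    intro j
    induction j with
    | zero =>
      intro _
      constructor
      · intro _; rw [hF0]; simp
      · omega
    | succ j ihj =>
      intro hj1
      obtain ⟨ih1, ih2⟩ := ihj (by omega)
      have hdimle : finrank K ↥(A ⊓ F (j+1)) ≤ j + 1 := by
        have h := Submodule.finrank_mono (inf_le_right : A ⊓ F (j+1) ≤ F (j+1))
        rwa [hFdim (j+1) hj1] at h
      have hmono2 : A ⊓ F j ≤ A ⊓ F (j+1) := inf_le_inf_left A (hFmono (Nat.le_succ j))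
      have hFne : F j ≠ F (j+1) := by
        intro h
        have := hFdim j (by omega)
        rw [h, hFdim (j+1) hj1] at this
        omega
      -- stall consequence
      have hstallc : H j = H (j+1) → finrank K ↥(A ⊓ F j) + 1 ≤ finrank K ↥(A ⊓ F (j+1)) := by
        intro hstall
        have hnotle : ¬ (A ⊓ F (j+1) ≤ F j) := by
          intro hcontra
          exact hFne (stall_lemma hmod hA (hFsub j) (hFsub (j+1))
            (hFmono (Nat.le_succ j)) hstall hcontra)
        have hstrict : A ⊓ F j < A ⊓ F (j+1) := by
          refine lt_of_le_of_ne hmono2 ?_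
          intro h
          exact hnotle (h ▸ inf_le_right)
        exact Submodule.finrank_lt_finrank_of_lt hstrict
      rcases hHval (j+1) with h1 | h1
      · -- H (j+1) = A, hence H j = A and the chain stalled
        have hHj : H j = A := le_antisymm (h1 ▸ gen_union_mono_right (hFmono (Nat.le_succ j)))
          (hAH j)
        have := hstallc (hHj.trans h1.symm)
        rw [ih1 hHj] at this
        constructor
        · intro _; omega
        · omega
      · -- H (j+1) = T
        constructor
        · intro h2; exact absurd (h2.symm.trans h1) hne
        · rcases hHval j with h3 | h3
          · have := Submodule.finrank_mono hmono2
            rw [ih1 h3] at this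
            omega
          · have := hstallc (h3.trans h1.symm)
            omega
  have hAT : A ⊓ F t = A := by
    rw [hFtop t le_rfl]
    exact inf_eq_left.mpr hle
  have := (key t le_rfl).2
  rw [hAT] at this
  omega

open Module in
/-- Dimension step: joining a one-step-bigger subalgebra raises dimension by at most one. -/
lemma step_dim [FiniteDimensional K E] (hmod : ModularLat μ)
    (hsolv : ∃ m : ℕ, dser μ (⊤ : Submodule K E) m = ⊥) {U B' B : Submodule K E}
    (hU : IsSubalg μ U) (hB' : IsSubalg μ B') (hB : IsSubalg μ B) (hle : B' ≤ B)
    (hdim : finrank K B = finrank K B' + 1) :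
    finrank K (gen μ (↑U ∪ ↑B)) ≤ finrank K (gen μ (↑U ∪ ↑B')) + 1 := by
  set A := gen μ (↑U ∪ ↑B') with hA
  set T := gen μ (↑U ∪ ↑B) with hTd
  have hAT : A ≤ T := gen_union_mono_right hle
  rcases eq_or_ne A T with h | h
  · rw [← h]; omega
  refine maximal_codim hmod hsolv isSubalg_gen isSubalg_gen hAT h ?_
  intro W hW hAW hWT
  have hmW := hmod A B W isSubalg_gen hB hW hAW
  have hgg : gen μ (↑A ∪ ↑B) = T := gen_gen hle
  rw [hgg, inf_eq_right.mpr hWT] at hmW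
  have hB'BW : B' ≤ B ⊓ W := le_inf hle ((le_gen_union_right.trans hAW : B' ≤ W))
  by_cases hc : finrank K ↥(B ⊓ W) ≤ finrank K B'
  · left
    have hBW : B' = B ⊓ W := Submodule.eq_of_le_of_finrank_le hB'BW hc
    rw [← hmW, ← hBW]
    exact gen_union_of_le isSubalg_gen le_gen_union_right
  · right
    have hBW : B ⊓ W = B := Submodule.eq_of_le_of_finrank_le inf_le_left (by omega)
    rw [← hmW, hBW, hgg]

open Module in
lemma forward_main [FiniteDimensional K E] (hmod : ModularLat μ)
    (hsolv : ∃ m : ℕ, dser μ (⊤ : Submodule K E) m = ⊥) {U V : Submodule K E}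
    (hU : IsSubalg μ U) (hV : IsSubalg μ V) : gen μ (↑U ∪ ↑V) = U ⊔ V := by
  obtain ⟨F, hFmono, hFsub, hFle, hFdim, hFtop⟩ := flag_lemma hsolv V hV
  set v := finrank K V with hv
  have hF0 : F 0 = ⊥ := by
    rw [← Submodule.finrank_eq_zero (R := K)]
    exact hFdim 0 (Nat.zero_le _)
  have key : ∀ j, j ≤ v →
      finrank K (gen μ (↑U ∪ ↑(F j))) + finrank K ↥(U ⊓ F j) ≤ finrank K U + j := by
    intro j
    induction j with
    | zero =>
      intro _
      rw [hF0, gen_union_of_le hU bot_le]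
      simp
    | succ j ihj =>
      intro hj1
      have ih := ihj (by omega)
      by_cases hc : U ⊓ F (j+1) ≤ F j
      · -- intersection stalls; gen step is at most 1 by step_dim
        have hieq : U ⊓ F (j+1) = U ⊓ F j :=
          le_antisymm (le_inf inf_le_left hc) (inf_le_inf_left U (hFmono (Nat.le_succ j)))
        have hstep := step_dim hmod hsolv hU (hFsub j) (hFsub (j+1)) (hFmono (Nat.le_succ j))
          (by rw [hFdim (j+1) hj1, hFdim j (by omega)])
        rw [hieq]
        omega
      · -- intersection moves; gen stalls
        obtain ⟨x, hx, hxn⟩ := SetLike.not_le_iff_exists.mp hc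
        have hxU : x ∈ U := hx.1
        have hxF : x ∈ F (j+1) := hx.2
        have hx0 : x ≠ 0 := fun h => hxn (h ▸ (F j).zero_mem)
        have hsub : F j ⊔ (K ∙ x) ≤ F (j+1) :=
          sup_le (hFmono (Nat.le_succ j)) ((Submodule.span_singleton_le_iff_mem x _).mpr hxF)
        have hFeq : F j ⊔ (K ∙ x) = F (j+1) := by
          apply Submodule.eq_of_le_of_finrank_le hsub
          rw [hFdim (j+1) hj1]
          have hstrict : F j < F j ⊔ (K ∙ x) := by
            refine lt_of_le_of_ne le_sup_left ?_
            intro h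
            apply hxn
            rw [h]
            exact (le_sup_right : (K ∙ x) ≤ F j ⊔ (K ∙ x)) (Submodule.mem_span_singleton_self x)
          have := Submodule.finrank_lt_finrank_of_lt hstrict
          rw [hFdim j (by omega)] at this
          omega
        have hgen : gen μ (↑U ∪ ↑(F (j+1))) = gen μ (↑U ∪ ↑(F j)) := by
          apply le_antisymm
          · refine gen_union_le isSubalg_gen le_gen_union_left ?_
            rw [← hFeq]
            exact sup_le le_gen_union_right
              ((Submodule.span_singleton_le_iff_mem x _).mpr (le_gen_union_left hxU))
          · exact gen_union_mono_right (hFmono (Nat.le_succ j))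
        have hidim : finrank K ↥(U ⊓ F (j+1)) ≤ finrank K ↥(U ⊓ F j) + 1 := by
          have h1 := Submodule.finrank_sup_add_finrank_inf_eq (U ⊓ F (j+1)) (F j)
          have h2 : (U ⊓ F (j+1)) ⊓ F j = U ⊓ F j := by
            rw [inf_assoc, inf_eq_right.mpr (hFmono (Nat.le_succ j) : F j ≤ F (j+1))]
          have h3 : (U ⊓ F (j+1)) ⊔ F j ≤ F (j+1) :=
            sup_le inf_le_right (hFmono (Nat.le_succ j))
          have h4 := Submodule.finrank_mono h3
          rw [h2] at h1
          rw [hFdim (j+1) hj1] at h4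
          have h5 := hFdim j (by omega : j ≤ v)
          omega
        rw [hgen]
        omega
  have hfin := key v le_rfl
  rw [hFtop v le_rfl] at hfin
  have hsup := Submodule.finrank_sup_add_finrank_inf_eq U V
  exact (Submodule.eq_of_le_of_finrank_le sup_le_gen (by omega)).symm

/-- the subalgebra lattice of a finite-dimensional solvable commutative
algebra is modular iff every subalgebra is a quasi-ideal. -/
theorem stmt13 [FiniteDimensional K E] (μ : E →ₗ[K] E →ₗ[K] E)
    (hcomm : ∀ x y : E, μ x y = μ y x)
    (hsolv : ∃ m : ℕ, dser μ ⊤ m = ⊥) :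
    ModularLat μ ↔ ∀ U : Submodule K E, IsSubalg μ U → QuasiIdeal μ U := by
  constructor
  · intro hmod U hU
    exact ⟨hU, fun V hV => forward_main hmod hsolv hU hV⟩
  · intro hq U V W hU hV hW hUW
    rw [(hq U hU).2 (V ⊓ W) (isSubalg_inf hV hW), (hq U hU).2 V hV]
    exact (sup_inf_assoc_of_le V hUW).symm
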